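/- Let S and r be parameters with 0 < S < 4r, and let u₀ be the standing wave. For all twice continuously differentiable, compactly supported functions h, k : ℝ → ℝ, one has ∫_ℝ k(x)·(Lh)(x)·e^{(4S/r)(u₀(x)² − u₀(x))} dx = ∫_ℝ h(x)·(Lk)(x)·e^{(4S/r)(u₀(x)² − u₀(x))} dx. -/

import Mathlib

open Real Filter Topology MeasureTheory

noncomputable def fpoly (u : ℝ) : ℝ := u * (2 * u - 1) * (1 - u)

noncomputable def Lop (S r : ℝ) (u₀ h : ℝ → ℝ) : ℝ → ℝ := fun x =>
  deriv (deriv h) x + (4 * S / r) * deriv u₀ x * (2 * u₀ x - 1) * deriv h x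
    + S * (deriv fpoly (u₀ x) + (4 / r) * (deriv u₀ x) ^ 2) * h x

/-!
`L` has the form `h'' + b h' + q h` with `b = c u₀' (2u₀ - 1)`, `c = 4S/r`, and the weight
`w = exp (c (u₀² - u₀))` satisfies `w' = b w`. Hence `w (k Lh - h Lk) = (w (k h' - h k'))'`
(the `q`-terms cancel), and the integral of this derivative of a compactly supported function
vanishes.
-/

noncomputable def sturmOp (b q h : ℝ → ℝ) : ℝ → ℝ := fun x =>
  deriv (deriv h) x + b x * deriv h x + q x * h x

theorem Continuous.sturmOp {b q h : ℝ → ℝ} (hb : Continuous b) (hq : Continuous q)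
    (hh : ContDiff ℝ 2 h) : Continuous (sturmOp b q h) :=
  ((hh.deriv' (n := 1)).continuous_deriv_one.add
    (hb.mul (hh.continuous_deriv (by norm_num)))).add (hq.mul hh.continuous)

theorem hasDerivAt_weighted_wronskian {w b q h k : ℝ → ℝ} {x : ℝ}
    (hw : HasDerivAt w (w x * b x) x) (hh : ContDiff ℝ 2 h) (hk : ContDiff ℝ 2 k) :
    HasDerivAt (fun y => w y * (k y * deriv h y - h y * deriv k y))
      (k x * sturmOp b q h x * w x - h x * sturmOp b q k x * w x) x := by
  have hk' := (hk.differentiable (by norm_num) x).hasDerivAt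
  have hh' := (hh.differentiable (by norm_num) x).hasDerivAt
  have hk'' := (hk.differentiable_deriv_two x).hasDerivAt
  have hh'' := (hh.differentiable_deriv_two x).hasDerivAt
  refine (hw.mul ((hk'.fun_mul hh'').fun_sub (hh'.fun_mul hk''))).congr_deriv ?_
  simp only [sturmOp]
  ring

theorem integral_mul_sturmOp_mul_comm {w b q h k : ℝ → ℝ}
    (hw : ∀ x, HasDerivAt w (w x * b x) x) (hb : Continuous b) (hq : Continuous q)
    (hh : ContDiff ℝ 2 h) (hk : ContDiff ℝ 2 k)
    (hhs : HasCompactSupport h) (hks : HasCompactSupport k) :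
    ∫ x, k x * sturmOp b q h x * w x = ∫ x, h x * sturmOp b q k x * w x := by
  have cw : Continuous w := continuous_iff_continuousAt.2 fun x => (hw x).continuousAt
  have ch' := hh.continuous_deriv (by norm_num)
  have ck' := hk.continuous_deriv (by norm_num)
  have iA : Integrable fun x => k x * sturmOp b q h x * w x :=
    ((hk.continuous.mul (hb.sturmOp hq hh)).mul cw).integrable_of_hasCompactSupport
      hks.mul_right.mul_right
  have iB : Integrable fun x => h x * sturmOp b q k x * w x :=
    ((hh.continuous.mul (hb.sturmOp hq hk)).mul cw).integrable_of_hasCompactSupport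
      hhs.mul_right.mul_right
  have iF : Integrable fun x => w x * (k x * deriv h x - h x * deriv k x) :=
    (cw.mul ((hk.continuous.mul ch').sub (hh.continuous.mul ck'))).integrable_of_hasCompactSupport
      (hks.mul_right.sub hhs.mul_right).mul_left
  have hzero := integral_eq_zero_of_hasDerivAt_of_integrable
    (fun x => hasDerivAt_weighted_wronskian (hw x) hh hk) (iA.sub iB) iF
  rw [integral_sub iA iB] at hzero
  exact sub_eq_zero.1 hzero

theorem hasDerivAt_exp_mul_sq_sub {u : ℝ → ℝ} (c : ℝ) {x : ℝ} (hu : DifferentiableAt ℝ u x) :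
    HasDerivAt (fun y => exp (c * (u y ^ 2 - u y)))
      (exp (c * (u x ^ 2 - u x)) * (c * deriv u x * (2 * u x - 1))) x := by
  refine (((hu.hasDerivAt.fun_pow 2).fun_sub hu.hasDerivAt).const_mul c).exp.congr_deriv ?_
  ring

theorem L_symmetric (S r : ℝ)
    (u₀ : ℝ → ℝ) (hu : ContDiff ℝ 2 u₀)
    (h k : ℝ → ℝ) (hh : ContDiff ℝ 2 h) (hk : ContDiff ℝ 2 k)
    (hhs : HasCompactSupport h) (hks : HasCompactSupport k) :
    ∫ x : ℝ, k x * Lop S r u₀ h x * Real.exp ((4 * S / r) * ((u₀ x) ^ 2 - u₀ x))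
      = ∫ x : ℝ, h x * Lop S r u₀ k x * Real.exp ((4 * S / r) * ((u₀ x) ^ 2 - u₀ x)) := by
  have cu' : Continuous (deriv u₀) := hu.continuous_deriv (by norm_num)
  have cf' : Continuous (deriv fpoly) :=
    (show ContDiff ℝ 2 fpoly by unfold fpoly; fun_prop).continuous_deriv (by norm_num)
  exact integral_mul_sturmOp_mul_comm
    (fun x => hasDerivAt_exp_mul_sq_sub (4 * S / r) (hu.differentiable (by norm_num) x))
    (by fun_prop) (by fun_prop) hh hk hhs hks
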